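/- arXiv:2112.06176 — 2 statements merged into one kernel-verified Lean document; each statement's English description precedes it below -/
import Mathlib

section
/- Let j ∈ {1,…,q}, ν > 0 and s ∈ ℝⁿ. If |(T̄_ℓ − T_ℓ)[s,…,s]| ≤ (ν/2)·Δt̄_j(s) for every ℓ ∈ {1,…,j}, then |Δt_j(s) − Δt̄_j(s)| ≤ ((e−1)/2)·ν·Δt̄_j(s); in particular (1−ν)·Δt̄_j(s) ≤ Δt_j(s) ≤ (1+ν)·Δt̄_j(s). -/
/-! Each error `(T̄_ℓ − T_ℓ)[s,…,s]` enters the decrement with weight `1/ℓ!`, and these weights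
sum to less than `e − 1 < 2`; hence the total error is at most `((e − 1)/2)·ν·Δt̄_j(s) ≤ ν·Δt̄_j(s)`. -/

open scoped BigOperators

noncomputable def taylorDecrement {n : ℕ}
    (T : ∀ ℓ : ℕ, ContinuousMultilinearMap ℝ (fun _ : Fin ℓ => EuclideanSpace ℝ (Fin n)) ℝ)
    (j : ℕ) (d : EuclideanSpace ℝ (Fin n)) : ℝ :=
  -∑ ℓ ∈ Finset.Icc 1 j, (1 / (Nat.factorial ℓ : ℝ)) * T ℓ (fun _ => d)

open Finset

theorem sum_Icc_one_div_factorial_le_exp_one_sub_one (j : ℕ) :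
    ∑ ℓ ∈ Icc 1 j, 1 / (ℓ.factorial : ℝ) ≤ Real.exp 1 - 1 := by
  have h := Real.sum_le_exp_of_nonneg zero_le_one (j + 1)
  rw [range_eq_Ico, sum_eq_sum_Ico_succ_bot j.succ_pos, zero_add, Nat.succ_eq_add_one,
    Ico_add_one_right_eq_Icc] at h
  simp only [pow_zero, one_pow, Nat.factorial_zero, Nat.cast_one, div_one] at h
  linarith

theorem abs_sum_Icc_one_div_factorial_mul_le {j : ℕ} {x : ℕ → ℝ} {M : ℝ} (hM : 0 ≤ M)
    (hx : ∀ ℓ ∈ Icc 1 j, |x ℓ| ≤ M) :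
    |∑ ℓ ∈ Icc 1 j, 1 / (ℓ.factorial : ℝ) * x ℓ| ≤ (Real.exp 1 - 1) * M :=
  calc |∑ ℓ ∈ Icc 1 j, 1 / (ℓ.factorial : ℝ) * x ℓ|
      ≤ ∑ ℓ ∈ Icc 1 j, 1 / (ℓ.factorial : ℝ) * M := by
        refine (abs_sum_le_sum_abs _ _).trans (sum_le_sum fun ℓ hℓ => ?_)
        rw [abs_mul, abs_of_nonneg (by positivity)]
        exact mul_le_mul_of_nonneg_left (hx ℓ hℓ) (by positivity)
    _ = (∑ ℓ ∈ Icc 1 j, 1 / (ℓ.factorial : ℝ)) * M := (sum_mul ..).symm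
    _ ≤ (Real.exp 1 - 1) * M :=
        mul_le_mul_of_nonneg_right (sum_Icc_one_div_factorial_le_exp_one_sub_one j) hM

section

variable {n : ℕ}
  (T Tb : ∀ ℓ : ℕ, ContinuousMultilinearMap ℝ (fun _ : Fin ℓ => EuclideanSpace ℝ (Fin n)) ℝ)

@[simp]
theorem taylorDecrement_zero (d : EuclideanSpace ℝ (Fin n)) : taylorDecrement T 0 d = 0 := by
  simp [taylorDecrement]

theorem taylorDecrement_sub_taylorDecrement (j : ℕ) (d : EuclideanSpace ℝ (Fin n)) :
    taylorDecrement T j d - taylorDecrement Tb j d =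
      ∑ ℓ ∈ Icc 1 j, 1 / (ℓ.factorial : ℝ) * (Tb ℓ (fun _ => d) - T ℓ (fun _ => d)) := by
  simp only [taylorDecrement, mul_sub, sum_sub_distrib]
  ring

end

theorem le_and_le_of_abs_sub_le_mul {a b c ν : ℝ} (hc₀ : 0 < c) (hc₁ : c ≤ 1)
    (h : |a - b| ≤ c * ν * b) : (1 - ν) * b ≤ a ∧ a ≤ (1 + ν) * b := by
  have hνb : 0 ≤ ν * b := by
    rw [mul_assoc] at h
    exact nonneg_of_mul_nonneg_right ((abs_nonneg _).trans h) hc₀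
  have hcνb : c * ν * b ≤ ν * b := by
    rw [mul_assoc]
    exact mul_le_of_le_one_left hνb hc₁
  constructor <;> linarith [abs_le.mp (h.trans hcνb)]

theorem taylorDecrement_relative_accuracy_general
    (n : ℕ)
    (T Tb : ∀ ℓ : ℕ, ContinuousMultilinearMap ℝ (fun _ : Fin ℓ => EuclideanSpace ℝ (Fin n)) ℝ)
    (j : ℕ)
    (ν : ℝ)
    (s : EuclideanSpace ℝ (Fin n))
    (herr : ∀ ℓ ∈ Finset.Icc 1 j,
      |Tb ℓ (fun _ => s) - T ℓ (fun _ => s)| ≤ (ν / 2) * taylorDecrement Tb j s) :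
    |taylorDecrement T j s - taylorDecrement Tb j s|
      ≤ ((Real.exp 1 - 1) / 2) * ν * taylorDecrement Tb j s ∧
    (1 - ν) * taylorDecrement Tb j s ≤ taylorDecrement T j s ∧
    taylorDecrement T j s ≤ (1 + ν) * taylorDecrement Tb j s := by
  have herr_nonneg : 0 ≤ ν / 2 * taylorDecrement Tb j s := by
    rcases j.eq_zero_or_pos with rfl | hj
    · simp
    · exact (abs_nonneg _).trans (herr 1 (mem_Icc.2 ⟨le_rfl, hj⟩))
  have hbound : |taylorDecrement T j s - taylorDecrement Tb j s|
      ≤ ((Real.exp 1 - 1) / 2) * ν * taylorDecrement Tb j s := by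
    rw [taylorDecrement_sub_taylorDecrement]
    linarith [abs_sum_Icc_one_div_factorial_mul_le herr_nonneg herr]
  have hexp : Real.exp 1 - 1 < 2 := by linarith [Real.exp_one_lt_d9]
  exact ⟨hbound, le_and_le_of_abs_sub_le_mul (by linarith [Real.add_one_lt_exp one_ne_zero])
    (by linarith) hbound⟩

/-- Lemma 2.2, second conclusion: accuracy of the tensors along the step `s` implies
relative accuracy of the Taylor decrement:
`|Δt_j(s) − Δt̄_j(s)| ≤ ((e−1)/2)·ν·Δt̄_j(s)`, and in particular
`(1−ν)·Δt̄_j(s) ≤ Δt_j(s) ≤ (1+ν)·Δt̄_j(s)`. -/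
theorem taylorDecrement_relative_accuracy
    (n q : ℕ) (hn : 1 ≤ n) (hq : 1 ≤ q)
    (T Tb : ∀ ℓ : ℕ, ContinuousMultilinearMap ℝ (fun _ : Fin ℓ => EuclideanSpace ℝ (Fin n)) ℝ)
    (j : ℕ) (hj : j ∈ Finset.Icc 1 q)
    (ν : ℝ) (hν : 0 < ν)
    (s : EuclideanSpace ℝ (Fin n))
    (herr : ∀ ℓ ∈ Finset.Icc 1 j,
      |Tb ℓ (fun _ => s) - T ℓ (fun _ => s)| ≤ (ν / 2) * taylorDecrement Tb j s) :
    |taylorDecrement T j s - taylorDecrement Tb j s|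
      ≤ ((Real.exp 1 - 1) / 2) * ν * taylorDecrement Tb j s ∧
    (1 - ν) * taylorDecrement Tb j s ≤ taylorDecrement T j s ∧
    taylorDecrement T j s ≤ (1 + ν) * taylorDecrement Tb j s :=
  taylorDecrement_relative_accuracy_general n T Tb j ν s herr
end

section
/- Work on a probability space (Ω, 𝒜, P) equipped with a filtration (ℱ_k)_{k∈ℕ} of sub-σ-algebras of 𝒜. Let c > 0 and B ≥ 0, and let N : Ω → ℕ ∪ {∞} satisfy {k < N} ∈ ℱ_k for every k. For each k ∈ ℕ let S_k, F_k, M_k ∈ 𝒜 be events, set E_k := F_k ∩ M_k, let Λ_k ∈ ℱ_k be an event, and let D_k be an integrable random variable. Assume that almost surely, for every k ∈ ℕ: (i) 1_{S_k}·1_{F_k}·D_k ≥ 0; (ii) if k < N then 1_{S_k}·1_{E_k}·1_{Λ_k}·D_k ≥ c·1_{S_k}·1_{E_k}·1_{Λ_k}; (iii) (1 − 1_{S_k})·D_k = 0; (iv) Σ_{k=0}^{ℓ} D_k ≤ B for every ℓ ∈ ℕ; and assume moreover that for every k, E[1_{S_k}·(1 − 1_{F_k})·D_k | ℱ_k] ≥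 0 almost surely. Then E[Σ_{k<N} 1_{S_k}·1_{E_k}·1_{Λ_k}] ≤ B/c + 1. -/
/-!
Let `A k` be the event that iteration `k < N` is successful, accurate and has large radius.
On `A k` the decrease `D k` is at least `c`; on successful iterations with accurate function
values it is nonnegative, and on successful iterations with inaccurate function values it is
nonnegative in conditional expectation, hence in expectation. So `c * P(A k) ≤ E[D k]`, and
summing over `k ≤ ℓ` gives `c * ∑ P(A k) ≤ E[∑ D k] ≤ B`, which bounds the expected number of
such iterations by `B / c`.
-/

open MeasureTheory Finset
open scoped ENNReal

theorem ENNReal.tsum_le_of_sum_range_succ_le {f : ℕ → ℝ≥0∞} {a : ℝ≥0∞}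
    (h : ∀ n, ∑ k ∈ range (n + 1), f k ≤ a) : ∑' k, f k ≤ a :=
  ENNReal.tsum_le_of_sum_range_le fun n =>
    (sum_le_sum_of_subset (range_subset_range.2 n.le_succ)).trans (h n)

section

variable {Ω : Type*} {mΩ : MeasurableSpace Ω} {μ : Measure Ω}

theorem integral_nonneg_of_ae_condExp_nonneg {m : MeasurableSpace Ω} {f : Ω → ℝ}
    (hm : m ≤ mΩ) [SigmaFinite (μ.trim hm)] (hf : ∀ᵐ ω ∂μ, 0 ≤ μ[f | m] ω) :
    0 ≤ ∫ ω, f ω ∂μ :=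
  integral_condExp (μ := μ) (f := f) hm ▸ integral_nonneg_of_ae hf

theorem lintegral_tsum_indicator_one {A : ℕ → Set Ω} (hA : ∀ k, MeasurableSet (A k)) :
    ∫⁻ ω, ∑' k, (A k).indicator 1 ω ∂μ = ∑' k, μ (A k) := by
  rw [lintegral_tsum fun k => (measurable_one.indicator (hA k)).aemeasurable]
  exact tsum_congr fun k => lintegral_indicator_one (hA k)

theorem mul_measureReal_le_integral [IsFiniteMeasure μ] {D : Ω → ℝ} {A E : Set Ω} {c : ℝ}
    (hD : Integrable D μ) (hA : MeasurableSet A) (hE : MeasurableSet E) (hAE : A ⊆ E)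
    (hcA : ∀ᵐ ω ∂μ, ω ∈ A → c ≤ D ω) (hDE : ∀ᵐ ω ∂μ, ω ∈ E → 0 ≤ D ω)
    (hDEc : 0 ≤ ∫ ω in Eᶜ, D ω ∂μ) : c * μ.real A ≤ ∫ ω, D ω ∂μ := by
  have hA_le : ∫ ω in A, D ω ∂μ ≤ ∫ ω in E, D ω ∂μ :=
    setIntegral_mono_set hD.integrableOn ((ae_restrict_iff' hE).2 hDE)
      (Filter.Eventually.of_forall hAE)
  calc c * μ.real A = ∫ _ in A, c ∂μ := by rw [setIntegral_const, smul_eq_mul, mul_comm]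
    _ ≤ ∫ ω in A, D ω ∂μ :=
        setIntegral_mono_ae_restrict integrableOn_const hD.integrableOn
          ((ae_restrict_iff' hA).2 hcA)
    _ ≤ ∫ ω in E, D ω ∂μ + ∫ ω in Eᶜ, D ω ∂μ := by linarith
    _ = ∫ ω, D ω ∂μ := integral_add_compl hE hD

theorem tsum_measure_le_ofReal_div [IsProbabilityMeasure μ] {A : ℕ → Set Ω}
    {D : ℕ → Ω → ℝ} {c B : ℝ} (hc : 0 < c) (hD : ∀ k, Integrable (D k) μ)
    (hAD : ∀ k, c * μ.real (A k) ≤ ∫ ω, D k ω ∂μ)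
    (hB : ∀ᵐ ω ∂μ, ∀ ℓ, ∑ k ∈ range (ℓ + 1), D k ω ≤ B) :
    ∑' k, μ (A k) ≤ ENNReal.ofReal (B / c) := by
  refine ENNReal.tsum_le_of_sum_range_succ_le fun ℓ => ?_
  have hsum : c * ∑ k ∈ range (ℓ + 1), μ.real (A k) ≤ B :=
    calc c * ∑ k ∈ range (ℓ + 1), μ.real (A k) ≤ ∑ k ∈ range (ℓ + 1), ∫ ω, D k ω ∂μ := by
          rw [mul_sum]
          exact sum_le_sum fun k _ => hAD k
      _ = ∫ ω, ∑ k ∈ range (ℓ + 1), D k ω ∂μ := (integral_finsetSum _ fun k _ => hD k).symm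
      _ ≤ ∫ _, B ∂μ :=
          integral_mono_ae (integrable_finsetSum _ fun k _ => hD k) (integrable_const B)
            (hB.mono fun ω h => h ℓ)
      _ = B := by simp
  have hfin : ∀ k ∈ range (ℓ + 1), μ (A k) ≠ ∞ := fun k _ => measure_ne_top μ (A k)
  rw [← ENNReal.ofReal_toReal (ENNReal.sum_ne_top.2 hfin), ENNReal.toReal_sum hfin]
  exact ENNReal.ofReal_le_ofReal ((le_div_iff₀' hc).2 hsum)

end

theorem expected_accurate_successful_le_general
    {Ω : Type*} {mΩ : MeasurableSpace Ω} (μ : Measure Ω) [IsProbabilityMeasure μ]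
    (ℱ : Filtration ℕ mΩ)
    (c B : ℝ) (hc : 0 < c)
    (N : Ω → ℕ∞)
    (hN : ∀ k, MeasurableSet[ℱ k] {ω | (k : ℕ∞) < N ω})
    (S F M : ℕ → Set Ω)
    (hSm : ∀ k, MeasurableSet (S k)) (hFm : ∀ k, MeasurableSet (F k))
    (hMm : ∀ k, MeasurableSet (M k))
    (Λ : ℕ → Set Ω) (hΛ : ∀ k, MeasurableSet[ℱ k] (Λ k))
    (D : ℕ → Ω → ℝ) (hD : ∀ k, Integrable (D k) μ)
    (h1 : ∀ᵐ ω ∂μ, ∀ k : ℕ, ω ∈ S k → ω ∈ F k → 0 ≤ D k ω)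
    (h2 : ∀ᵐ ω ∂μ, ∀ k : ℕ, (k : ℕ∞) < N ω →
      ω ∈ S k → ω ∈ F k ∩ M k → ω ∈ Λ k → c ≤ D k ω)
    (h3 : ∀ᵐ ω ∂μ, ∀ k : ℕ, ω ∉ S k → D k ω = 0)
    (h4 : ∀ᵐ ω ∂μ, ∀ ℓ : ℕ, ∑ k ∈ Finset.range (ℓ + 1), D k ω ≤ B)
    (h5 : ∀ k, ∀ᵐ ω ∂μ,
      0 ≤ (μ[fun ω' => (S k).indicator (fun _ => (1 : ℝ)) ω' *
            (1 - (F k).indicator (fun _ => (1 : ℝ)) ω') * D k ω' | ℱ k]) ω) :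
    (∫⁻ ω, ∑' (k : ℕ), ({ω' | (k : ℕ∞) < N ω'}.indicator (fun _ => (1 : ℝ≥0∞)) ω) *
        ((S k).indicator (fun _ => (1 : ℝ≥0∞)) ω) *
        ((F k ∩ M k).indicator (fun _ => (1 : ℝ≥0∞)) ω) *
        ((Λ k).indicator (fun _ => (1 : ℝ≥0∞)) ω) ∂μ)
      ≤ ENNReal.ofReal (B / c + 1) := by
  set A : ℕ → Set Ω := fun k => {ω | (k : ℕ∞) < N ω} ∩ S k ∩ (F k ∩ M k) ∩ Λ k
  have hA : ∀ k, MeasurableSet (A k) := fun k =>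
    (((ℱ.le k _ (hN k)).inter (hSm k)).inter ((hFm k).inter (hMm k))).inter (ℱ.le k _ (hΛ k))
  have hDc : ∀ k, 0 ≤ ∫ ω in (S k ∩ F k)ᶜ, D k ω ∂μ := fun k => by
    have hg : (fun ω => (S k).indicator (fun _ => (1 : ℝ)) ω *
        (1 - (F k).indicator (fun _ => (1 : ℝ)) ω) * D k ω) =ᵐ[μ]
          (S k ∩ F k)ᶜ.indicator (D k) := by
      filter_upwards [h3] with ω hω
      by_cases hs : ω ∈ S k <;> by_cases hf : ω ∈ F k <;> simp [hs, hf, hω k]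
    rw [← integral_indicator ((hSm k).inter (hFm k)).compl, ← integral_congr_ae hg]
    exact integral_nonneg_of_ae_condExp_nonneg (ℱ.le k) (h5 k)
  have hAD : ∀ k, c * μ.real (A k) ≤ ∫ ω, D k ω ∂μ := fun k =>
    mul_measureReal_le_integral (hD k) (hA k) ((hSm k).inter (hFm k))
      (fun ω hω => ⟨hω.1.1.2, hω.1.2.1⟩)
      (h2.mono fun ω h hω => h k hω.1.1.1 hω.1.1.2 hω.1.2 hω.2)
      (h1.mono fun ω h hω => h k hω.1 hω.2) (hDc k)
  calc _ = ∫⁻ ω, ∑' k, (A k).indicator 1 ω ∂μ := by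
        simp only [A, ← Pi.one_def, Set.inter_indicator_one, Pi.mul_apply]
    _ = ∑' k, μ (A k) := lintegral_tsum_indicator_one hA
    _ ≤ ENNReal.ofReal (B / c) := tsum_measure_le_ofReal_div hc hD hAD h4
    _ ≤ ENNReal.ofReal (B / c + 1) := ENNReal.ofReal_le_ofReal (by linarith)

/-- Lemma 3.6 of the paper (abstract form): the expected number of accurate successful
iterations with large radius before `N` is at most `B/c + 1`. -/
theorem expected_accurate_successful_le
    {Ω : Type*} {mΩ : MeasurableSpace Ω} (μ : Measure Ω) [IsProbabilityMeasure μ]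
    (ℱ : Filtration ℕ mΩ)
    (c B : ℝ) (hc : 0 < c) (hB : 0 ≤ B)
    (N : Ω → ℕ∞)
    (hN : ∀ k, MeasurableSet[ℱ k] {ω | (k : ℕ∞) < N ω})
    (S F M : ℕ → Set Ω)
    (hSm : ∀ k, MeasurableSet (S k)) (hFm : ∀ k, MeasurableSet (F k))
    (hMm : ∀ k, MeasurableSet (M k))
    (Λ : ℕ → Set Ω) (hΛ : ∀ k, MeasurableSet[ℱ k] (Λ k))
    (D : ℕ → Ω → ℝ) (hD : ∀ k, Integrable (D k) μ)
    (h1 : ∀ᵐ ω ∂μ, ∀ k : ℕ, ω ∈ S k → ω ∈ F k → 0 ≤ D k ω)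
    (h2 : ∀ᵐ ω ∂μ, ∀ k : ℕ, (k : ℕ∞) < N ω →
      ω ∈ S k → ω ∈ F k ∩ M k → ω ∈ Λ k → c ≤ D k ω)
    (h3 : ∀ᵐ ω ∂μ, ∀ k : ℕ, ω ∉ S k → D k ω = 0)
    (h4 : ∀ᵐ ω ∂μ, ∀ ℓ : ℕ, ∑ k ∈ Finset.range (ℓ + 1), D k ω ≤ B)
    (h5 : ∀ k, ∀ᵐ ω ∂μ,
      0 ≤ (μ[fun ω' => (S k).indicator (fun _ => (1 : ℝ)) ω' *
            (1 - (F k).indicator (fun _ => (1 : ℝ)) ω') * D k ω' | ℱ k]) ω) :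
    (∫⁻ ω, ∑' (k : ℕ), ({ω' | (k : ℕ∞) < N ω'}.indicator (fun _ => (1 : ℝ≥0∞)) ω) *
        ((S k).indicator (fun _ => (1 : ℝ≥0∞)) ω) *
        ((F k ∩ M k).indicator (fun _ => (1 : ℝ≥0∞)) ω) *
        ((Λ k).indicator (fun _ => (1 : ℝ≥0∞)) ω) ∂μ)
      ≤ ENNReal.ofReal (B / c + 1) :=
  expected_accurate_successful_le_general μ ℱ c B hc N hN S F M hSm hFm hMm Λ hΛ D hD h1 h2 h3 h4 h5
end
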